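/- Let (T̃_t^α g)(x) = (4πt)^{-1/2} e^{2αx} ∫_x^∞ e^{-2αz} ∫_0^∞ [((z−y+4αt)/(2t)) e^{-(z−y)²/(4t)} + ((z+y−4αt)/(2t)) e^{-(z+y)²/(4t)}] g(y) dy dz, and let (T_t^Neu g)(x) = (4πt)^{-1/2} ∫_0^∞ [e^{-(x−y)²/(4t)} + e^{-(x+y)²/(4t)}] g(y) dy. Then for every bounded continuous g : (0,∞) → ℝ with compact support, every t > 0 and x > 0, lim_{α→0⁺} (T̃_t^α g)(x) = (T_t^Neu g)(x). -/

import Mathlib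

open Real MeasureTheory Set Filter Topology

/-- Neumann heat semigroup on the half-line. -/
noncomputable def TNeu (t : ℝ) (g : ℝ → ℝ) (x : ℝ) : ℝ :=
  ∫ y in Set.Ioi (0 : ℝ),
    (Real.exp (-(x - y) ^ 2 / (4 * t)) + Real.exp (-(x + y) ^ 2 / (4 * t)))
      * g y / Real.sqrt (4 * Real.pi * t)

/-- The semigroup associated to the Robin problem on the half-line. -/
noncomputable def Ttilde (α t : ℝ) (g : ℝ → ℝ) (x : ℝ) : ℝ :=
  Real.exp (2 * α * x) *
    ∫ z in Set.Ici x, Real.exp (-2 * α * z) *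
      (∫ y in Set.Ioi (0 : ℝ),
        (((z - y + 4 * α * t) / (2 * t)) * Real.exp (-(z - y) ^ 2 / (4 * t))
          + ((z + y - 4 * α * t) / (2 * t)) * Real.exp (-(z + y) ^ 2 / (4 * t)))
        * g y) / Real.sqrt (4 * Real.pi * t)

/-!
Up to the term `4α e^{-(z+y)²/4t}`, the weighted Robin kernel `e^{-2αz} K_α(z, y)` is the exact
`z`-derivative of `-e^{-2αz} (G(z - y) + G(z + y))`, where `G(u) = e^{-u²/4t}`. After exchanging the
`z`- and `y`-integrals (Fubini), the `z`-integral is therefore explicit, and the kernel of `T̃_t^α`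
differs from the Neumann kernel by `4α` times a Gaussian integral bounded by `√(4πt)`. Hence
`|T̃_t^α g x - T_t^Neu g x| ≤ 4α ‖g‖₁`.
-/

noncomputable def neumannKernel (t x y : ℝ) : ℝ :=
  exp (-(x - y) ^ 2 / (4 * t)) + exp (-(x + y) ^ 2 / (4 * t))

noncomputable def robinKernel (α t z y : ℝ) : ℝ :=
  ((z - y + 4 * α * t) / (2 * t)) * exp (-(z - y) ^ 2 / (4 * t))
    + ((z + y - 4 * α * t) / (2 * t)) * exp (-(z + y) ^ 2 / (4 * t))

lemma exp_neg_sq_div_le_one {t : ℝ} (ht : 0 < t) (u : ℝ) : exp (-u ^ 2 / (4 * t)) ≤ 1 :=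
  exp_le_one_iff.2 (div_nonpos_of_nonpos_of_nonneg (neg_nonpos.2 (sq_nonneg u)) (by positivity))

lemma abs_mul_exp_neg_sq_div_le {t : ℝ} (ht : 0 < t) (u : ℝ) :
    |u| * exp (-u ^ 2 / (4 * t)) ≤ 1 + 4 * t := by
  set v := u ^ 2 / (4 * t)
  have hv : u ^ 2 = 4 * t * v := by simp only [v]; field_simp
  have hexp : exp (-u ^ 2 / (4 * t)) = exp (-v) := by rw [neg_div]
  have hve : v * exp (-v) ≤ 1 := by
    rw [exp_neg, ← div_eq_mul_inv, div_le_one (exp_pos v)]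
    linarith [add_one_le_exp v]
  have hu : |u| ≤ 1 + u ^ 2 := by nlinarith [abs_mul_abs_self u, abs_nonneg u]
  calc |u| * exp (-u ^ 2 / (4 * t)) ≤ (1 + 4 * t * v) * exp (-v) := by
        rw [hexp, ← hv]; gcongr
    _ = exp (-v) + 4 * t * (v * exp (-v)) := by ring
    _ ≤ 1 + 4 * t * 1 := by
        gcongr
        exact hexp ▸ exp_neg_sq_div_le_one ht u
    _ = 1 + 4 * t := by ring

lemma abs_robinKernel_le {α t : ℝ} (hα : 0 ≤ α) (ht : 0 < t) (z y : ℝ) :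
    |robinKernel α t z y| ≤ (1 + 4 * t) / t + 2 * α := by
  set e₁ := exp (-(z - y) ^ 2 / (4 * t))
  set e₂ := exp (-(z + y) ^ 2 / (4 * t))
  have h₁ : |z - y| * e₁ ≤ 1 + 4 * t := abs_mul_exp_neg_sq_div_le ht (z - y)
  have h₂ : |z + y| * e₂ ≤ 1 + 4 * t := abs_mul_exp_neg_sq_div_le ht (z + y)
  have he : |e₁ - e₂| ≤ 1 := abs_sub_le_iff.2
    ⟨by linarith [exp_neg_sq_div_le_one ht (z - y), exp_pos (-(z + y) ^ 2 / (4 * t))],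
     by linarith [exp_neg_sq_div_le_one ht (z + y), exp_pos (-(z - y) ^ 2 / (4 * t))]⟩
  have hsplit : robinKernel α t z y
      = ((z - y) * e₁ + (z + y) * e₂) / (2 * t) + 2 * α * (e₁ - e₂) := by
    have key : ∀ a b : ℝ,
        ((z - y + 4 * α * t) / (2 * t)) * a + ((z + y - 4 * α * t) / (2 * t)) * b
          = ((z - y) * a + (z + y) * b) / (2 * t) + 2 * α * (a - b) := fun a b => by
      field_simp; ring
    exact key e₁ e₂
  calc |robinKernel α t z y|
      ≤ (|z - y| * e₁ + |z + y| * e₂) / (2 * t) + 2 * α * |e₁ - e₂| := by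
        rw [hsplit]
        refine (abs_add_le _ _).trans (add_le_add ?_ ?_)
        · rw [abs_div, abs_of_pos (by positivity : 0 < 2 * t)]
          gcongr
          refine (abs_add_le _ _).trans_eq ?_
          rw [abs_mul, abs_mul, abs_of_pos (exp_pos _), abs_of_pos (exp_pos _)]
        · rw [abs_mul, abs_of_nonneg (by positivity : 0 ≤ 2 * α)]
    _ ≤ (2 * (1 + 4 * t)) / (2 * t) + 2 * α * 1 := by gcongr; linarith
    _ = (1 + 4 * t) / t + 2 * α := by field_simp

lemma hasDerivAt_exp_mul_neumannKernel (α : ℝ) {t : ℝ} (ht : t ≠ 0) (y z : ℝ) :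
    HasDerivAt (fun z => exp (-2 * α * z) * neumannKernel t z y)
      (-(exp (-2 * α * z) * (robinKernel α t z y + 4 * α * exp (-(z + y) ^ 2 / (4 * t)))))
      z := by
  have hG : ∀ c : ℝ, HasDerivAt (fun z => exp (-(z + c) ^ 2 / (4 * t)))
      (exp (-(z + c) ^ 2 / (4 * t)) * (-(2 * (z + c)) / (4 * t))) z := fun c => by
    simpa using ((((hasDerivAt_id z).add_const c).pow 2).neg.div_const (4 * t)).exp
  have hN : HasDerivAt (fun z => neumannKernel t z y)
      (exp (-(z - y) ^ 2 / (4 * t)) * (-(2 * (z - y)) / (4 * t))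
        + exp (-(z + y) ^ 2 / (4 * t)) * (-(2 * (z + y)) / (4 * t))) z := by
    have h := (hG (-y)).add (hG y)
    simp only [← sub_eq_add_neg] at h
    exact h
  have hE : HasDerivAt (fun z => exp (-2 * α * z)) (exp (-2 * α * z) * (-2 * α)) z := by
    simpa using ((hasDerivAt_id z).const_mul (-2 * α)).exp
  refine (hE.fun_mul hN).congr_deriv ?_
  simp only [neumannKernel, robinKernel]
  field_simp
  ring

lemma integrableOn_exp_mul_of_abs_le {α C : ℝ} (hα : 0 < α) {f : ℝ → ℝ} (hf : Continuous f)
    (hfC : ∀ z, |f z| ≤ C) (a : ℝ) :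
    IntegrableOn (fun z => exp (-2 * α * z) * f z) (Ioi a) := by
  have hexp : IntegrableOn (fun z => exp (-2 * α * z)) (Ioi a) := by
    simpa [neg_mul] using exp_neg_integrableOn_Ioi a (by positivity : 0 < 2 * α)
  exact hexp.mul_bdd hf.aestronglyMeasurable (ae_of_all _ hfC)

lemma tendsto_exp_mul_neumannKernel_atTop {α t : ℝ} (hα : 0 < α) (ht : 0 < t) (y : ℝ) :
    Tendsto (fun z => exp (-2 * α * z) * neumannKernel t z y) atTop (𝓝 0) := by
  refine Tendsto.zero_mul_isBoundedUnder_le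
    (tendsto_exp_atBot.comp (tendsto_id.const_mul_atTop_of_neg (by linarith)))
    (isBoundedUnder_of ⟨2, fun z => ?_⟩)
  have := exp_neg_sq_div_le_one ht (z - y)
  have := exp_neg_sq_div_le_one ht (z + y)
  simp only [Function.comp_apply, neumannKernel, norm_eq_abs]
  rw [abs_of_pos (by positivity)]
  linarith

lemma integral_Ioi_exp_mul_robinKernel {α t : ℝ} (hα : 0 < α) (ht : 0 < t) (x y : ℝ) :
    ∫ z in Ioi x, exp (-2 * α * z) * robinKernel α t z y
      = exp (-2 * α * x) * neumannKernel t x y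
        - 4 * α * ∫ z in Ioi x, exp (-2 * α * z) * exp (-(z + y) ^ 2 / (4 * t)) := by
  have hK := integrableOn_exp_mul_of_abs_le hα (by unfold robinKernel; fun_prop)
    (abs_robinKernel_le hα.le ht · y) x
  have hG := integrableOn_exp_mul_of_abs_le hα (by fun_prop)
    (fun z => (abs_of_pos (exp_pos _)).trans_le (exp_neg_sq_div_le_one ht (z + y))) x
  have hsum : IntegrableOn (fun z => exp (-2 * α * z) * robinKernel α t z y
      + 4 * α * (exp (-2 * α * z) * exp (-(z + y) ^ 2 / (4 * t)))) (Ioi x) :=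
    hK.add (hG.const_mul (4 * α))
  have hFTC := integral_Ioi_of_hasDerivAt_of_tendsto'
    (fun z _ => hasDerivAt_exp_mul_neumannKernel α ht.ne' y z)
    (hsum.neg.congr_fun (fun z _ => by simp only [Pi.neg_apply]; ring) measurableSet_Ioi)
    (tendsto_exp_mul_neumannKernel_atTop hα ht y)
  have hsplit : ∫ z in Ioi x, exp (-2 * α * z) * (robinKernel α t z y
        + 4 * α * exp (-(z + y) ^ 2 / (4 * t)))
      = (∫ z in Ioi x, exp (-2 * α * z) * robinKernel α t z y)
        + 4 * α * ∫ z in Ioi x, exp (-2 * α * z) * exp (-(z + y) ^ 2 / (4 * t)) := by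
    rw [← integral_const_mul, ← integral_add hK (hG.const_mul _)]
    congr 1 with z
    ring
  rw [integral_neg, hsplit] at hFTC
  linarith

lemma integral_exp_neg_sq_div {t : ℝ} (ht : 0 < t) :
    ∫ z, exp (-z ^ 2 / (4 * t)) = √(4 * π * t) := by
  calc ∫ z, exp (-z ^ 2 / (4 * t)) = ∫ z, exp (-(1 / (4 * t)) * z ^ 2) := by
        congr 1 with z; ring_nf
    _ = √(4 * π * t) := by rw [integral_gaussian]; congr 1; field_simp

lemma integrable_exp_neg_sq_div {t : ℝ} (ht : 0 < t) :
    Integrable (fun z => exp (-z ^ 2 / (4 * t))) := by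
  convert integrable_exp_neg_mul_sq (by positivity : 0 < 1 / (4 * t)) using 3 with z
  ring

noncomputable def TtildeKernel (α t x y : ℝ) : ℝ :=
  exp (2 * α * x) * ∫ z in Ici x, exp (-2 * α * z) * robinKernel α t z y

lemma TtildeKernel_eq_neumannKernel_sub {α t : ℝ} (hα : 0 < α) (ht : 0 < t) (x y : ℝ) :
    TtildeKernel α t x y = neumannKernel t x y
      - 4 * α * ∫ z in Ioi x, exp (2 * α * (x - z)) * exp (-(z + y) ^ 2 / (4 * t)) := by
  have hexp : ∀ z, exp (2 * α * (x - z)) = exp (2 * α * x) * exp (-2 * α * z) := fun z => by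
    rw [← exp_add]; ring_nf
  have hcancel : exp (2 * α * x) * exp (-2 * α * x) = 1 := by
    rw [← exp_add]; ring_nf; exact exp_zero
  rw [TtildeKernel, integral_Ici_eq_integral_Ioi, integral_Ioi_exp_mul_robinKernel hα ht]
  have hpull : ∫ z in Ioi x, exp (2 * α * (x - z)) * exp (-(z + y) ^ 2 / (4 * t))
      = exp (2 * α * x) * ∫ z in Ioi x, exp (-2 * α * z) * exp (-(z + y) ^ 2 / (4 * t)) := by
    rw [← integral_const_mul]
    simp_rw [hexp, mul_assoc]
  rw [hpull]
  linear_combination neumannKernel t x y * hcancel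

lemma integral_Ioi_exp_mul_exp_neg_sq_le {α t : ℝ} (hα : 0 < α) (ht : 0 < t) (x y : ℝ) :
    ∫ z in Ioi x, exp (2 * α * (x - z)) * exp (-(z + y) ^ 2 / (4 * t)) ≤ √(4 * π * t) := by
  have hG : Integrable (fun z => exp (-(z + y) ^ 2 / (4 * t))) :=
    (integrable_exp_neg_sq_div ht).comp_add_right y
  have hprod : IntegrableOn (fun z => exp (2 * α * (x - z)) * exp (-(z + y) ^ 2 / (4 * t)))
      (Ioi x) := by
    refine hG.integrableOn.bdd_mul (c := 1) (f := fun z => exp (2 * α * (x - z)))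
      (by fun_prop) ?_
    filter_upwards [ae_restrict_mem measurableSet_Ioi] with z hz
    rw [norm_eq_abs, abs_of_pos (exp_pos _), exp_le_one_iff]
    nlinarith [mem_Ioi.1 hz]
  calc ∫ z in Ioi x, exp (2 * α * (x - z)) * exp (-(z + y) ^ 2 / (4 * t))
      ≤ ∫ z in Ioi x, exp (-(z + y) ^ 2 / (4 * t)) := by
        refine setIntegral_mono_on hprod hG.integrableOn measurableSet_Ioi fun z hz => ?_
        refine mul_le_of_le_one_left (exp_pos _).le (exp_le_one_iff.2 ?_)
        nlinarith [mem_Ioi.1 hz]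
    _ ≤ ∫ z, exp (-(z + y) ^ 2 / (4 * t)) :=
        setIntegral_le_integral hG (ae_of_all _ fun z => (exp_pos _).le)
    _ = √(4 * π * t) := by
        rw [integral_add_right_eq_self (fun z => exp (-z ^ 2 / (4 * t))) y,
          integral_exp_neg_sq_div ht]

lemma abs_TtildeKernel_sub_neumannKernel_le {α t : ℝ} (hα : 0 < α) (ht : 0 < t) (x y : ℝ) :
    |TtildeKernel α t x y - neumannKernel t x y| ≤ 4 * α * √(4 * π * t) := by
  rw [TtildeKernel_eq_neumannKernel_sub hα ht, sub_sub_cancel_left, abs_neg, abs_mul,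
    abs_of_pos (by positivity : 0 < 4 * α)]
  gcongr
  rw [abs_of_nonneg (setIntegral_nonneg measurableSet_Ioi fun z _ => by positivity)]
  exact integral_Ioi_exp_mul_exp_neg_sq_le hα ht x y

section Fubini

variable {X Y : Type*} [MeasurableSpace X] [MeasurableSpace Y] {μ : Measure X} {ν : Measure Y}
  {k : X → Y → ℝ} {u : X → ℝ} {g : Y → ℝ}

lemma integrable_prod_mul_of_abs_le [SFinite ν]
    (hk : AEStronglyMeasurable (Function.uncurry k) (μ.prod ν))
    (hu : Integrable u μ) (hg : Integrable g ν) (hku : ∀ z y, |k z y| ≤ u z) :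
    Integrable (fun p : X × Y => k p.1 p.2 * g p.2) (μ.prod ν) := by
  refine (hu.mul_prod hg.norm).mono' (hk.mul hg.1.comp_snd) (ae_of_all _ fun p => ?_)
  rw [norm_mul, norm_eq_abs]
  exact mul_le_mul_of_nonneg_right (hku p.1 p.2) (norm_nonneg _)

variable [SFinite μ] [SFinite ν]

lemma integral_integral_mul_swap (hk : AEStronglyMeasurable (Function.uncurry k) (μ.prod ν))
    (hu : Integrable u μ) (hg : Integrable g ν) (hku : ∀ z y, |k z y| ≤ u z) :
    ∫ z, ∫ y, k z y * g y ∂ν ∂μ = ∫ y, (∫ z, k z y ∂μ) * g y ∂ν := by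
  simp_rw [← integral_mul_const]
  exact integral_integral_swap (integrable_prod_mul_of_abs_le hk hu hg hku)

lemma integrable_integral_mul (hk : AEStronglyMeasurable (Function.uncurry k) (μ.prod ν))
    (hu : Integrable u μ) (hg : Integrable g ν) (hku : ∀ z y, |k z y| ≤ u z) :
    Integrable (fun y => (∫ z, k z y ∂μ) * g y) ν := by
  simpa only [integral_mul_const] using
    (integrable_prod_mul_of_abs_le hk hu hg hku).integral_prod_right

end Fubini

section Semigroups

variable {α t x : ℝ} {g : ℝ → ℝ}

lemma aestronglyMeasurable_exp_mul_robinKernel (μ ν : Measure ℝ) :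
    AEStronglyMeasurable (Function.uncurry fun z y => exp (-2 * α * z) * robinKernel α t z y)
      (μ.prod ν) :=
  (by unfold robinKernel; fun_prop : Continuous _).aestronglyMeasurable

lemma integrableOn_Ici_exp_mul_const (hα : 0 < α) (C : ℝ) :
    IntegrableOn (fun z => exp (-2 * α * z) * C) (Ici x) := by
  rw [integrableOn_Ici_iff_integrableOn_Ioi]
  exact integrableOn_exp_mul_of_abs_le hα continuous_const (fun _ => le_rfl) x

lemma abs_exp_mul_robinKernel_le (hα : 0 < α) (ht : 0 < t) (z y : ℝ) :
    |exp (-2 * α * z) * robinKernel α t z y|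
      ≤ exp (-2 * α * z) * ((1 + 4 * t) / t + 2 * α) := by
  rw [abs_mul, abs_of_pos (exp_pos _)]
  exact mul_le_mul_of_nonneg_left (abs_robinKernel_le hα.le ht z y) (exp_pos _).le

lemma Ttilde_eq_integral_TtildeKernel (hα : 0 < α) (ht : 0 < t)
    (hg : Integrable g (volume.restrict (Ioi 0))) :
    Ttilde α t g x = (∫ y in Ioi 0, TtildeKernel α t x y * g y) / √(4 * π * t) := by
  have hswap := integral_integral_mul_swap (aestronglyMeasurable_exp_mul_robinKernel _ _)
    (integrableOn_Ici_exp_mul_const (x := x) hα _) hg (abs_exp_mul_robinKernel_le hα ht)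
  calc Ttilde α t g x
      = exp (2 * α * x) * ∫ z in Ici x,
          (∫ y in Ioi 0, exp (-2 * α * z) * robinKernel α t z y * g y) / √(4 * π * t) := by
        unfold Ttilde
        congr 2 with z
        rw [← integral_const_mul]
        congr 2 with y
        rw [robinKernel]
        ring
    _ = (∫ y in Ioi 0, TtildeKernel α t x y * g y) / √(4 * π * t) := by
        rw [integral_div, hswap, ← mul_div_assoc, ← integral_const_mul]
        simp only [TtildeKernel, mul_assoc]

lemma integrable_TtildeKernel_mul (hα : 0 < α) (ht : 0 < t)
    (hg : Integrable g (volume.restrict (Ioi 0))) :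
    Integrable (fun y => TtildeKernel α t x y * g y) (volume.restrict (Ioi 0)) := by
  have h := integrable_integral_mul (aestronglyMeasurable_exp_mul_robinKernel _ _)
    (integrableOn_Ici_exp_mul_const (x := x) hα _) hg (abs_exp_mul_robinKernel_le hα ht)
  simpa only [TtildeKernel, mul_assoc] using h.const_mul (exp (2 * α * x))

lemma TNeu_eq_integral_neumannKernel :
    TNeu t g x = (∫ y in Ioi 0, neumannKernel t x y * g y) / √(4 * π * t) :=
  integral_div _ _

lemma abs_Ttilde_sub_TNeu_le (hα : 0 < α) (ht : 0 < t) (hgc : Continuous g)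
    (hgs : HasCompactSupport g) :
    |Ttilde α t g x - TNeu t g x| ≤ 4 * α * ∫ y in Ioi 0, |g y| := by
  have hg : Integrable g (volume.restrict (Ioi 0)) := hgc.integrable_of_hasCompactSupport hgs
  have hN : Integrable (fun y => neumannKernel t x y * g y) (volume.restrict (Ioi 0)) :=
    ((by unfold neumannKernel; fun_prop : Continuous _).mul hgc).integrable_of_hasCompactSupport
      hgs.mul_left
  have hs : 0 < √(4 * π * t) := sqrt_pos.2 (by positivity)
  rw [Ttilde_eq_integral_TtildeKernel hα ht hg, TNeu_eq_integral_neumannKernel, ← sub_div,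
    ← integral_sub (integrable_TtildeKernel_mul hα ht hg) hN, abs_div, abs_of_pos hs,
    div_le_iff₀ hs, ← integral_const_mul, ← integral_mul_const]
  refine abs_integral_le_integral_abs.trans <| integral_mono_of_nonneg
    (ae_of_all _ fun _ => abs_nonneg _) ((hg.abs.const_mul _).mul_const _) (ae_of_all _ fun y => ?_)
  dsimp only
  rw [← sub_mul, abs_mul, mul_right_comm]
  exact mul_le_mul_of_nonneg_right (abs_TtildeKernel_sub_neumannKernel_le hα ht x y) (abs_nonneg _)

end Semigroups

theorem Ttilde_tendsto_TNeu_general (t x : ℝ) (ht : 0 < t)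
    (g : ℝ → ℝ) (hgc : Continuous g) (hgs : HasCompactSupport g) :
    Tendsto (fun α : ℝ => Ttilde α t g x) (𝓝[>] 0) (𝓝 (TNeu t g x)) := by
  have hbound : Tendsto (fun α : ℝ => 4 * α * ∫ y in Ioi 0, |g y|) (𝓝[>] 0) (𝓝 0) := by
    have := (by fun_prop : Continuous fun α : ℝ => 4 * α * ∫ y in Ioi 0, |g y|).tendsto 0
    simpa using this.mono_left nhdsWithin_le_nhds
  rw [← tendsto_sub_nhds_zero_iff]
  refine squeeze_zero_norm' ?_ hbound
  filter_upwards [self_mem_nhdsWithin] with α hα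
  exact abs_Ttilde_sub_TNeu_le hα ht hgc hgs

theorem Ttilde_tendsto_TNeu (t x : ℝ) (ht : 0 < t) (hx : 0 < x)
    (g : ℝ → ℝ) (hgc : Continuous g) (hgs : HasCompactSupport g)
    (hsupp : Function.support g ⊆ Set.Ioi (0 : ℝ)) :
    Tendsto (fun α : ℝ => Ttilde α t g x) (𝓝[>] 0) (𝓝 (TNeu t g x)) :=
  Ttilde_tendsto_TNeu_general t x ht g hgc hgs
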